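/- Let G be a finite simple graph, r < s positive integers, k ≤ k' positive integers, 𝒮 a k-(r,s)-nucleus of G and 𝒮' a k'-(r,s)-nucleus of G. If 𝒮 and 𝒮' contain a common s-clique (i.e., 𝒮 ∩ 𝒮' ≠ ∅ as sets of s-cliques), then 𝒮' ⊆ 𝒮. Consequently, the family of all (r,s)-nuclei of G (over all values of k) forms a laminar family: any two nuclei are either disjoint or one contains the other. -/

import Mathlib

variable {V : Type*} [Fintype V] [DecidableEq V]

/-- `𝒮` is a set of `s`-cliques of the graph `G`. -/
def CliqueSet (G : SimpleGraph V) (s : ℕ) (𝒮 : Finset (Finset V)) : Prop :=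
  ∀ S ∈ 𝒮, G.IsNClique s S

/-- `R ∈ K_r(𝒮)`: `R` is an `r`-clique of `G` contained in some member of `𝒮`. -/
def InKr (G : SimpleGraph V) (r : ℕ) (𝒮 : Finset (Finset V)) (R : Finset V) : Prop :=
  G.IsNClique r R ∧ ∃ S ∈ 𝒮, R ⊆ S

/-- The `𝒮`-degree of `R`: the number of members of `𝒮` containing `R`. -/
def SDeg (𝒮 : Finset (Finset V)) (R : Finset V) : ℕ :=
  (𝒮.filter fun S => R ⊆ S).card

/-- One step of `𝒮`-connectivity: both `R` and `R'` are in `K_r(𝒮)` and some member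
of `𝒮` contains `R ∪ R'`. -/
def Step (G : SimpleGraph V) (r : ℕ) (𝒮 : Finset (Finset V)) (R R' : Finset V) : Prop :=
  InKr G r 𝒮 R ∧ InKr G r 𝒮 R' ∧ ∃ S ∈ 𝒮, R ∪ R' ⊆ S

/-- `R` and `R'` are `𝒮`-connected: there is a sequence of members of `K_r(𝒮)` from `R`
to `R'` in which each consecutive pair is contained in a common member of `𝒮`. -/
def SConnected (G : SimpleGraph V) (r : ℕ) (𝒮 : Finset (Finset V)) (R R' : Finset V) : Prop :=
  Relation.ReflTransGen (Step G r 𝒮) R R'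

/-- The degree condition at level `k`: every `R ∈ K_r(𝒮)` has `𝒮`-degree at least `k`. -/
def DegCond (G : SimpleGraph V) (r k : ℕ) (𝒮 : Finset (Finset V)) : Prop :=
  ∀ R, InKr G r 𝒮 R → k ≤ SDeg 𝒮 R

/-- The connectivity condition: every two members of `K_r(𝒮)` are `𝒮`-connected. -/
def ConnCond (G : SimpleGraph V) (r : ℕ) (𝒮 : Finset (Finset V)) : Prop :=
  ∀ R R', InKr G r 𝒮 R → InKr G r 𝒮 R' → SConnected G r 𝒮 R R'

/-- `𝒮` satisfies all the (non-maximality) conditions of a `k`-`(r,s)`-nucleus. -/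
def NucleusPre (G : SimpleGraph V) (r s k : ℕ) (𝒮 : Finset (Finset V)) : Prop :=
  CliqueSet G s 𝒮 ∧ DegCond G r k 𝒮 ∧ ConnCond G r 𝒮

/-- `𝒮` is a `k`-`(r,s)`-nucleus of `G`: a set of `s`-cliques, maximal under inclusion,
satisfying the degree condition at level `k` and the connectivity condition. -/
def IsNucleus (G : SimpleGraph V) (r s k : ℕ) (𝒮 : Finset (Finset V)) : Prop :=
  NucleusPre G r s k 𝒮 ∧ ∀ 𝒯, NucleusPre G r s k 𝒯 → 𝒮 ⊆ 𝒯 → 𝒯 = 𝒮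

/-!
If a `k`-nucleus `𝒮` and a `k'`-nucleus `𝒮'` (with `k ≤ k'`) share an `s`-clique, then
`𝒮 ∪ 𝒮'` still satisfies the `k`-degree condition, and it is connected because any
`r`-clique of the shared `s`-clique lies in `K_r` of both. Maximality of `𝒮` then gives
`𝒮 ∪ 𝒮' = 𝒮`. Laminarity follows by comparing the levels of two intersecting nuclei.
-/

section

omit [Fintype V]

variable {G : SimpleGraph V} {r k k' : ℕ} {𝒮 𝒮' : Finset (Finset V)} {R R' : Finset V}

omit [DecidableEq V] in
lemma InKr.mono (h : 𝒮 ⊆ 𝒮') (hR : InKr G r 𝒮 R) : InKr G r 𝒮' R :=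
  ⟨hR.1, hR.2.imp fun _ hS => ⟨h hS.1, hS.2⟩⟩

omit [DecidableEq V] in
lemma exists_inKr_of_mem {s : ℕ} (hrs : r ≤ s) (h𝒮 : CliqueSet G s 𝒮) {S : Finset V}
    (hS : S ∈ 𝒮) : ∃ R ⊆ S, InKr G r 𝒮 R := by
  obtain ⟨R, hRS, hR⟩ := Finset.exists_subset_card_eq ((h𝒮 S hS).card_eq ▸ hrs)
  exact ⟨R, hRS, ⟨(h𝒮 S hS).isClique.subset hRS, hR⟩, S, hS, hRS⟩

lemma DegCond.anti (h : DegCond G r k' 𝒮) (hkk' : k ≤ k') : DegCond G r k 𝒮 :=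
  fun R hR => hkk'.trans (h R hR)

lemma CliqueSet.union {s : ℕ} (h : CliqueSet G s 𝒮) (h' : CliqueSet G s 𝒮') :
    CliqueSet G s (𝒮 ∪ 𝒮') := by
  intro S hS
  rcases Finset.mem_union.mp hS with hS | hS
  exacts [h S hS, h' S hS]

lemma inKr_union : InKr G r (𝒮 ∪ 𝒮') R ↔ InKr G r 𝒮 R ∨ InKr G r 𝒮' R := by
  simp only [InKr, Finset.mem_union, or_and_right, exists_or, and_or_left]

lemma SDeg.mono (h : 𝒮 ⊆ 𝒮') (R : Finset V) : SDeg 𝒮 R ≤ SDeg 𝒮' R :=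
  Finset.card_le_card (Finset.filter_subset_filter _ h)

lemma Step.mono (h : 𝒮 ⊆ 𝒮') (hR : Step G r 𝒮 R R') : Step G r 𝒮' R R' :=
  ⟨hR.1.mono h, hR.2.1.mono h, hR.2.2.imp fun _ hS => ⟨h hS.1, hS.2⟩⟩

lemma Step.symm (h : Step G r 𝒮 R R') : Step G r 𝒮 R' R :=
  ⟨h.2.1, h.1, Finset.union_comm R R' ▸ h.2.2⟩

lemma SConnected.mono (h : 𝒮 ⊆ 𝒮') (hR : SConnected G r 𝒮 R R') : SConnected G r 𝒮' R R' :=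
  Relation.ReflTransGen.mono (fun _ _ => Step.mono h) _ _ hR

instance : Std.Symm (Step G r 𝒮) := ⟨fun _ _ => Step.symm⟩

lemma SConnected.symm (h : SConnected G r 𝒮 R R') : SConnected G r 𝒮 R' R :=
  Std.Symm.symm (r := Relation.ReflTransGen _) _ _ h

lemma DegCond.union (h : DegCond G r k 𝒮) (h' : DegCond G r k 𝒮') :
    DegCond G r k (𝒮 ∪ 𝒮') := by
  intro R hR
  rcases inKr_union.mp hR with hR | hR
  · exact (h R hR).trans (SDeg.mono Finset.subset_union_left R)
  · exact (h' R hR).trans (SDeg.mono Finset.subset_union_right R)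

lemma ConnCond.union (h : ConnCond G r 𝒮) (h' : ConnCond G r 𝒮') {R₀ : Finset V}
    (hR₀ : InKr G r 𝒮 R₀) (hR₀' : InKr G r 𝒮' R₀) : ConnCond G r (𝒮 ∪ 𝒮') := by
  have toR₀ : ∀ R, InKr G r (𝒮 ∪ 𝒮') R → SConnected G r (𝒮 ∪ 𝒮') R R₀ := by
    intro R hR
    rcases inKr_union.mp hR with hR | hR
    · exact (h R R₀ hR hR₀).mono Finset.subset_union_left
    · exact (h' R R₀ hR hR₀').mono Finset.subset_union_right
  exact fun R R' hR hR' => (toR₀ R hR).trans (toR₀ R' hR').symm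

lemma IsNucleus.subset_of_inter_nonempty {s : ℕ} (hS : IsNucleus G r s k 𝒮)
    (hrs : r ≤ s) (hkk' : k ≤ k') (hS' : IsNucleus G r s k' 𝒮') (hne : (𝒮 ∩ 𝒮').Nonempty) :
    𝒮' ⊆ 𝒮 := by
  obtain ⟨S₀, hS₀⟩ := hne
  obtain ⟨hS₀, hS₀'⟩ := Finset.mem_inter.mp hS₀
  obtain ⟨⟨hclq, hdeg, hconn⟩, hmax⟩ := hS
  obtain ⟨⟨hclq', hdeg', hconn'⟩, -⟩ := hS'
  obtain ⟨R₀, hR₀S₀, hR₀⟩ := exists_inKr_of_mem hrs hclq hS₀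
  have hR₀' : InKr G r 𝒮' R₀ := ⟨hR₀.1, S₀, hS₀', hR₀S₀⟩
  have hunion : NucleusPre G r s k (𝒮 ∪ 𝒮') :=
    ⟨hclq.union hclq', hdeg.union (hdeg'.anti hkk'), hconn.union hconn' hR₀ hR₀'⟩
  rw [← hmax _ hunion Finset.subset_union_left]
  exact Finset.subset_union_right

end

theorem nuclei_laminar_general (G : SimpleGraph V) (r s k k' : ℕ)
    (hrs : r < s) (hkk' : k ≤ k')
    (𝒮 𝒮' : Finset (Finset V))
    (hS : IsNucleus G r s k 𝒮) (hS' : IsNucleus G r s k' 𝒮') :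
    ((𝒮 ∩ 𝒮').Nonempty → 𝒮' ⊆ 𝒮) ∧
    (∀ k₁ k₂ : ℕ, 0 < k₁ → 0 < k₂ → ∀ 𝒯 𝒯' : Finset (Finset V),
      IsNucleus G r s k₁ 𝒯 → IsNucleus G r s k₂ 𝒯' →
      𝒯 ∩ 𝒯' = ∅ ∨ 𝒯 ⊆ 𝒯' ∨ 𝒯' ⊆ 𝒯) := by
  refine ⟨hS.subset_of_inter_nonempty hrs.le hkk' hS', fun k₁ k₂ _ _ 𝒯 𝒯' hT hT' => ?_⟩
  rcases (𝒯 ∩ 𝒯').eq_empty_or_nonempty with hempty | hne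
  · exact Or.inl hempty
  rcases le_total k₁ k₂ with h | h
  · exact Or.inr (Or.inr (hT.subset_of_inter_nonempty hrs.le h hT' hne))
  · rw [Finset.inter_comm] at hne
    exact Or.inr (Or.inl (hT'.subset_of_inter_nonempty hrs.le h hT hne))

/-- Nuclei with a common `s`-clique are nested, and the family of all
`(r,s)`-nuclei forms a laminar family. -/
theorem nuclei_laminar (G : SimpleGraph V) (r s k k' : ℕ)
    (hr : 0 < r) (hrs : r < s) (hk : 0 < k) (hkk' : k ≤ k')
    (𝒮 𝒮' : Finset (Finset V))
    (hS : IsNucleus G r s k 𝒮) (hS' : IsNucleus G r s k' 𝒮') :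
    ((𝒮 ∩ 𝒮').Nonempty → 𝒮' ⊆ 𝒮) ∧
    (∀ k₁ k₂ : ℕ, 0 < k₁ → 0 < k₂ → ∀ 𝒯 𝒯' : Finset (Finset V),
      IsNucleus G r s k₁ 𝒯 → IsNucleus G r s k₂ 𝒯' →
      𝒯 ∩ 𝒯' = ∅ ∨ 𝒯 ⊆ 𝒯' ∨ 𝒯' ⊆ 𝒯) :=
  nuclei_laminar_general G r s k k' hrs hkk' 𝒮 𝒮' hS hS'
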